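/- Let h > 0, C > 0, and define F(p₁, p₂) = log₂(1 + (p₂·h²)/(1 + p₁·h²))/(p₂ + C) - exp(κ·p₂). Then the mixed partial derivative ∂²F/∂p₂∂p₁ is nonnegative if and only if p₂ ≥ sqrt(C·(p₁·h² + 1)/h²), for p₁, p₂ > 0. -/

import Mathlib

/-!
Write `g = h²` and `a = 1 + p₁ g` for the interference-plus-noise level seen by the cell-edge
user. Since `log₂ (1 + p₂ g / a) = (log (a + p₂ g) - log a) / log 2`, the partial derivative in
`p₂` is a closed-form function of `a` alone (plus a term free of `p₁`), and differentiating it in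
`a` leaves `g (g p₂² - C a) / (a (a + p₂ g)² log 2 (p₂ + C)²)`, as the terms
`1 / a - 1 / (a + p₂ g)` and `-g (p₂ + C) / (a + p₂ g)²` combine. The chain rule contributes one
more factor `g > 0`, so the sign of the mixed partial is that of `g p₂² - C a`.
-/

open Real Filter Topology

lemma logb_one_add_mul_div (g a y : ℝ) (ha : 0 < a) (hy : 0 < a + y * g) :
    logb 2 (1 + y * g / a) = (log (a + y * g) - log a) / log 2 := by
  rw [logb, ← log_div hy.ne' ha.ne', add_div, div_self ha.ne']

lemma hasDerivAt_logb_one_add_mul_div (g a x : ℝ) (ha : 0 < a) (hx : 0 < a + x * g) :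
    HasDerivAt (fun y => logb 2 (1 + y * g / a)) (g / ((a + x * g) * log 2)) x := by
  have hlin : HasDerivAt (fun y => 1 + y * g / a) (g / a) x := by
    simpa using (((hasDerivAt_id x).mul_const g).div_const a).const_add 1
  have hpos : 0 < 1 + x * g / a := by
    rw [one_add_div ha.ne']; positivity
  refine ((hlin.log hpos.ne').div_const (log 2)).congr_deriv ?_
  field_simp

/-- `∂F/∂p₂` at power `x`, as a function of the interference-plus-noise level `a`. -/
noncomputable def utilityPowerSlope (g C κ x a : ℝ) : ℝ :=
  (g * (x + C) / (a + x * g) - log (a + x * g) + log a) / (log 2 * (x + C) ^ 2)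
    - κ * exp (κ * x)

lemma hasDerivAt_utility_power (g C κ a x : ℝ) (ha : 0 < a) (hx : 0 < a + x * g)
    (hxC : x + C ≠ 0) :
    HasDerivAt (fun y => logb 2 (1 + y * g / a) / (y + C) - exp (κ * y))
      (utilityPowerSlope g C κ x a) x := by
  have hden : HasDerivAt (fun y => y + C) 1 x := (hasDerivAt_id x).add_const C
  have hexp : HasDerivAt (fun y => exp (κ * y)) (exp (κ * x) * κ) x := by
    simpa using ((hasDerivAt_id x).const_mul κ).exp
  refine (((hasDerivAt_logb_one_add_mul_div g a x ha hx).div hden hxC).sub hexp).congr_deriv ?_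
  rw [logb_one_add_mul_div g a x ha hx, utilityPowerSlope]
  have : log 2 ≠ 0 := by positivity
  field_simp
  ring

lemma hasDerivAt_utilityPowerSlope (g C κ x a : ℝ) (ha : 0 < a) (hx : 0 < a + x * g) :
    HasDerivAt (utilityPowerSlope g C κ x)
      (g * (g * x ^ 2 - C * a) / (a * (a + x * g) ^ 2 * (log 2 * (x + C) ^ 2))) a := by
  have hS : HasDerivAt (fun a' => a' + x * g) 1 a := (hasDerivAt_id a).add_const _
  refine (((((hasDerivAt_const a (g * (x + C))).div hS hx.ne').sub (hS.log hx.ne')).add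
    (hasDerivAt_log ha.ne')).div_const (log 2 * (x + C) ^ 2) |>.sub_const _).congr_deriv ?_
  field_simp
  ring

lemma deriv_deriv_ce_utility (h C κ p₁ p₂ : ℝ) (hC : 0 < C) (hp₁ : 0 ≤ p₁) (hp₂ : 0 ≤ p₂) :
    deriv (fun q₁ : ℝ =>
        deriv (fun q₂ : ℝ =>
          logb 2 (1 + (q₂ * h ^ 2) / (1 + q₁ * h ^ 2)) / (q₂ + C) - exp (κ * q₂)) p₂) p₁
      = h ^ 4 * (h ^ 2 * p₂ ^ 2 - C * h ^ 2 * p₁ - C)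
        / (log 2 * (C + p₂) ^ 2 * (h ^ 2 * p₁ + 1) * (h ^ 2 * p₂ + h ^ 2 * p₁ + 1) ^ 2) := by
  have hA : 0 < 1 + p₁ * h ^ 2 := by positivity
  have hpC : p₂ + C ≠ 0 := by positivity
  have hnear : ∀ᶠ q₁ in 𝓝 p₁, 0 < 1 + q₁ * h ^ 2 :=
    (continuous_const.add (continuous_id.mul continuous_const)).continuousAt.eventually
      (eventually_gt_nhds hA)
  have hpartial : (fun q₁ : ℝ =>
      deriv (fun q₂ : ℝ =>
        logb 2 (1 + (q₂ * h ^ 2) / (1 + q₁ * h ^ 2)) / (q₂ + C) - exp (κ * q₂)) p₂)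
      =ᶠ[𝓝 p₁] fun q₁ => utilityPowerSlope (h ^ 2) C κ p₂ (1 + q₁ * h ^ 2) := by
    filter_upwards [hnear] with q₁ hq₁
    exact (hasDerivAt_utility_power _ _ _ _ _ hq₁ (by positivity) hpC).deriv
  have hlin : HasDerivAt (fun q₁ : ℝ => 1 + q₁ * h ^ 2) (h ^ 2) p₁ := by
    simpa using ((hasDerivAt_id p₁).mul_const (h ^ 2)).const_add 1
  rw [hpartial.deriv_eq]
  refine ((hasDerivAt_utilityPowerSlope (h ^ 2) C κ p₂ _ hA (by positivity)).comp p₁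
    hlin).deriv.trans ?_
  have : log 2 ≠ 0 := by positivity
  field_simp
  ring

lemma sqrt_div_le_iff {b c x : ℝ} (hb : 0 < b) (hx : 0 ≤ x) : √(c / b) ≤ x ↔ c ≤ b * x ^ 2 := by
  rw [sqrt_le_left hx, div_le_iff₀' hb]

theorem ce_utility_supermodular_iff (h C κ : ℝ) (hh : 0 < h) (hC : 0 < C)
    (p₁ p₂ : ℝ) (hp₁ : 0 < p₁) (hp₂ : 0 < p₂) :
    0 ≤ deriv (fun q₁ : ℝ =>
        deriv (fun q₂ : ℝ =>
          Real.logb 2 (1 + (q₂ * h ^ 2) / (1 + q₁ * h ^ 2)) / (q₂ + C)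
            - Real.exp (κ * q₂)) p₂) p₁
      ↔ p₂ ≥ Real.sqrt (C * (p₁ * h ^ 2 + 1) / h ^ 2) := by
  rw [deriv_deriv_ce_utility h C κ p₁ p₂ hC hp₁.le hp₂.le, ge_iff_le,
    sqrt_div_le_iff (by positivity) hp₂.le, le_div_iff₀ (by positivity), zero_mul,
    mul_nonneg_iff_of_pos_left (by positivity)]
  constructor <;> intro hle <;> linarith
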